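/- Let H be a complex Hilbert space, B, C ∈ B(H), α ∈ ℂ with α ≠ 0, and β ≥ 0. Set δ₁ = (2(β+1)·max{1, |α−1|²} + 2β) / (|α|²(β+1)) and δ₂ = 2 / (|α|²(β+1)). Let 𝕋 be the operator on H ⊕ H given by 𝕋(x, y) = (B y, C x). Then ω(𝕋)⁴ ≤ (δ₁/4)·max{ ‖ |C|² + |B*|² ‖², ‖ |B|² + |C*|² ‖² } + δ₂·max{ ω(BC)², ω(CB)² }. -/

import Mathlib

open ContinuousLinearMap in
/-- The numerical radius `ω(A) = sup { |⟨A x, x⟩| : ‖x‖ = 1 }` of a bounded operator. -/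
noncomputable def numRad {H : Type*} [NormedAddCommGroup H] [InnerProductSpace ℂ H]
    (A : H →L[ℂ] H) : ℝ :=
  sSup {t : ℝ | ∃ x : H, ‖x‖ = 1 ∧ t = ‖(inner ℂ (A x) x : ℂ)‖}

/-- The absolute value `|A| = (A*A)^{1/2}` of a bounded operator, via the continuous
functional calculus. -/
noncomputable def absOp {E F : Type*} [NormedAddCommGroup E] [InnerProductSpace ℂ E]
    [CompleteSpace E] [NormedAddCommGroup F] [InnerProductSpace ℂ F] [CompleteSpace F]
    (A : E →L[ℂ] F) : E →L[ℂ] E :=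
  cfc Real.sqrt ((ContinuousLinearMap.adjoint A).comp A)

open ContinuousLinearMap

open scoped InnerProductSpace ComplexConjugate

/-!
For a unit vector `x` put `a = T x` and `b = T† x`, so that `⟪a, x⟫ = ⟪x, b⟫ = ⟪T x, x⟫` and
`⟪a, b⟫ = ⟪T² x, x⟫`. For a unit `e`, the vector `v = a - (conj α ⟪e, a⟫) e` satisfies
`α ⟪a, e⟫ ⟪e, b⟫ = ⟪a, b⟫ - ⟪v, b⟫` and `‖v‖² ≤ max 1 |α - 1|² ‖a‖²`; averaging the resulting
bound on `|α|² |⟪a, e⟫ ⟪e, b⟫|²` with Cauchy–Schwarz (weights `1` and `β`) gives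
`|⟪a, e⟫ ⟪e, b⟫|² ≤ δ₁ ‖a‖² ‖b‖² + δ₂ |⟪a, b⟫|²`. Since
`‖a‖² ‖b‖² ≤ ((‖T x‖² + ‖T† x‖²) / 2)² ≤ ‖T† T + T T†‖² / 4`, this bounds `ω(T)⁴` for every `T`.
For the off-diagonal `T`, both `T† T + T T†` and `T²` are block diagonal, with blocks
`C† C + B B†`, `B† B + C C†` and `B C`, `C B`.
-/

section NumRad

variable {E : Type*} [NormedAddCommGroup E] [InnerProductSpace ℂ E]

lemma bddAbove_numRad_set (A : E →L[ℂ] E) :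
    BddAbove {t : ℝ | ∃ x : E, ‖x‖ = 1 ∧ t = ‖⟪A x, x⟫_ℂ‖} := by
  refine ⟨‖A‖, ?_⟩
  rintro t ⟨x, hx, rfl⟩
  calc ‖⟪A x, x⟫_ℂ‖ ≤ ‖A x‖ * ‖x‖ := norm_inner_le_norm _ _
    _ ≤ ‖A‖ * ‖x‖ * ‖x‖ := by gcongr; exact A.le_opNorm x
    _ = ‖A‖ := by rw [hx, mul_one, mul_one]

lemma numRad_nonneg (A : E →L[ℂ] E) : 0 ≤ numRad A :=
  Real.sSup_nonneg <| by rintro t ⟨x, -, rfl⟩; exact norm_nonneg _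

lemma norm_inner_self_le_numRad_mul_sq (A : E →L[ℂ] E) (x : E) :
    ‖⟪A x, x⟫_ℂ‖ ≤ numRad A * ‖x‖ ^ 2 := by
  rcases eq_or_ne x 0 with rfl | hx
  · simp
  have hunit : ‖(‖x‖ : ℂ)⁻¹ • x‖ = 1 := by
    rw [norm_smul, norm_inv, Complex.norm_real, norm_norm,
      inv_mul_cancel₀ (norm_ne_zero_iff.mpr hx)]
  have hle := le_csSup (bddAbove_numRad_set A) ⟨_, hunit, rfl⟩
  rw [map_smul, inner_smul_left, inner_smul_right, norm_mul, norm_mul, RCLike.conj_inv,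
    Complex.conj_ofReal, norm_inv, Complex.norm_real, norm_norm] at hle
  rw [← div_le_iff₀ (by positivity)]
  calc ‖⟪A x, x⟫_ℂ‖ / ‖x‖ ^ 2 = ‖x‖⁻¹ * (‖x‖⁻¹ * ‖⟪A x, x⟫_ℂ‖) := by ring
    _ ≤ numRad A := hle

lemma numRad_pow_le_of_forall {A : E →L[ℂ] E} {n : ℕ} (hn : n ≠ 0) {c : ℝ} (hc : 0 ≤ c)
    (h : ∀ x : E, ‖x‖ = 1 → ‖⟪A x, x⟫_ℂ‖ ^ n ≤ c) : numRad A ^ n ≤ c := by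
  have hroot : numRad A ≤ c ^ (n⁻¹ : ℝ) := by
    refine Real.sSup_le ?_ (by positivity)
    rintro t ⟨x, hx, rfl⟩
    rw [← pow_le_pow_iff_left₀ (norm_nonneg _) (by positivity) hn, Real.rpow_inv_natCast_pow hc hn]
    exact h x hx
  calc numRad A ^ n ≤ (c ^ (n⁻¹ : ℝ)) ^ n := by gcongr; exact numRad_nonneg A
    _ = c := Real.rpow_inv_natCast_pow hc hn

end NumRad

noncomputable def numRadδ₁ (α : ℂ) (β : ℝ) : ℝ :=
  (2 * (β + 1) * max 1 (‖α - 1‖ ^ 2) + 2 * β) / (‖α‖ ^ 2 * (β + 1))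

noncomputable def numRadδ₂ (α : ℂ) (β : ℝ) : ℝ :=
  2 / (‖α‖ ^ 2 * (β + 1))

lemma numRadδ₁_nonneg (α : ℂ) {β : ℝ} (hβ : 0 ≤ β) : 0 ≤ numRadδ₁ α β := by
  unfold numRadδ₁
  positivity

lemma numRadδ₂_nonneg (α : ℂ) {β : ℝ} (hβ : 0 ≤ β) : 0 ≤ numRadδ₂ α β := by
  unfold numRadδ₂
  positivity

section Buzano

variable {E : Type*} [NormedAddCommGroup E] [InnerProductSpace ℂ E] {e : E}

lemma norm_sub_smul_inner_sq_le (he : ‖e‖ = 1) (α : ℂ) (a : E) :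
    ‖a - (conj α * ⟪e, a⟫_ℂ) • e‖ ^ 2 ≤ max 1 (‖α - 1‖ ^ 2) * ‖a‖ ^ 2 := by
  set p := ⟪e, a⟫_ℂ
  have hp : ‖p‖ ≤ ‖a‖ := by simpa [he] using norm_inner_le_norm e a
  have hre : RCLike.re ⟪a, (conj α * p) • e⟫_ℂ = α.re * ‖p‖ ^ 2 := by
    rw [inner_smul_right, ← inner_conj_symm, mul_assoc,
      Complex.mul_conj', ← Complex.ofReal_pow, RCLike.re_to_complex, Complex.re_mul_ofReal,
      Complex.conj_re]
  have hα : ‖α - 1‖ ^ 2 = ‖α‖ ^ 2 - 2 * α.re + 1 := by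
    rw [Complex.sq_norm, Complex.sq_norm, Complex.normSq_sub, Complex.normSq_one, map_one, mul_one]
    ring
  -- the vector is the orthogonal sum of `a - p • e` and `((1 - conj α) * p) • e`
  have hv : ‖a - (conj α * p) • e‖ ^ 2 = (‖a‖ ^ 2 - ‖p‖ ^ 2) + ‖α - 1‖ ^ 2 * ‖p‖ ^ 2 := by
    rw [@norm_sub_sq ℂ, hre, norm_smul, norm_mul, RCLike.norm_conj, he, hα]
    ring
  have hM1 : 1 ≤ max 1 (‖α - 1‖ ^ 2) := le_max_left _ _
  have hM2 : ‖α - 1‖ ^ 2 ≤ max 1 (‖α - 1‖ ^ 2) := le_max_right _ _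
  have hpa : ‖p‖ ^ 2 ≤ ‖a‖ ^ 2 := by gcongr
  rw [hv]
  nlinarith [sq_nonneg ‖p‖]

lemma sq_norm_mul_norm_inner_mul_inner_le (he : ‖e‖ = 1) (α : ℂ) (a b : E) :
    ‖α‖ ^ 2 * (‖⟪a, e⟫_ℂ‖ * ‖⟪e, b⟫_ℂ‖) ^ 2 ≤
      2 * ‖⟪a, b⟫_ℂ‖ ^ 2 + 2 * max 1 (‖α - 1‖ ^ 2) * (‖a‖ ^ 2 * ‖b‖ ^ 2) := by
  set v := a - (conj α * ⟪e, a⟫_ℂ) • e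
  have hid : α * ⟪a, e⟫_ℂ * ⟪e, b⟫_ℂ = ⟪a, b⟫_ℂ - ⟪v, b⟫_ℂ := by
    rw [inner_sub_left, inner_smul_left, map_mul, Complex.conj_conj,
      inner_conj_symm]
    ring
  have htri : ‖α‖ * (‖⟪a, e⟫_ℂ‖ * ‖⟪e, b⟫_ℂ‖) ≤ ‖⟪a, b⟫_ℂ‖ + ‖v‖ * ‖b‖ := by
    rw [← mul_assoc, ← norm_mul, ← norm_mul, hid]
    exact (norm_sub_le _ _).trans (by gcongr; exact norm_inner_le_norm v b)
  have hvb : (‖v‖ * ‖b‖) ^ 2 ≤ max 1 (‖α - 1‖ ^ 2) * (‖a‖ ^ 2 * ‖b‖ ^ 2) := by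
    rw [mul_pow, ← mul_assoc]
    gcongr
    exact norm_sub_smul_inner_sq_le he α a
  calc ‖α‖ ^ 2 * (‖⟪a, e⟫_ℂ‖ * ‖⟪e, b⟫_ℂ‖) ^ 2
      = (‖α‖ * (‖⟪a, e⟫_ℂ‖ * ‖⟪e, b⟫_ℂ‖)) ^ 2 := by ring
    _ ≤ (‖⟪a, b⟫_ℂ‖ + ‖v‖ * ‖b‖) ^ 2 := by gcongr
    _ ≤ 2 * ‖⟪a, b⟫_ℂ‖ ^ 2 + 2 * (‖v‖ * ‖b‖) ^ 2 := by
        nlinarith [sq_nonneg (‖⟪a, b⟫_ℂ‖ - ‖v‖ * ‖b‖)]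
    _ ≤ _ := by linarith

lemma sq_norm_inner_mul_inner_le {α : ℂ} (hα : α ≠ 0) {β : ℝ} (hβ : 0 ≤ β) (he : ‖e‖ = 1)
    (a b : E) :
    (‖⟪a, e⟫_ℂ‖ * ‖⟪e, b⟫_ℂ‖) ^ 2 ≤
      numRadδ₁ α β * (‖a‖ ^ 2 * ‖b‖ ^ 2) + numRadδ₂ α β * ‖⟪a, b⟫_ℂ‖ ^ 2 := by
  have hkey := sq_norm_mul_norm_inner_mul_inner_le he α a b
  set M := max 1 (‖α - 1‖ ^ 2)
  have hα_sq : ‖α‖ ^ 2 ≤ 2 + 2 * M := by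
    have h : ‖α‖ ≤ ‖α - 1‖ + 1 := by simpa using norm_add_le (α - 1) 1
    have hM : ‖α - 1‖ ^ 2 ≤ M := le_max_right _ _
    nlinarith [sq_nonneg (‖α - 1‖ - 1), norm_nonneg α]
  have hCS : (‖⟪a, e⟫_ℂ‖ * ‖⟪e, b⟫_ℂ‖) ^ 2 ≤ ‖a‖ ^ 2 * ‖b‖ ^ 2 := by
    rw [← mul_pow]
    gcongr
    · simpa [he] using norm_inner_le_norm a e
    · simpa [he] using norm_inner_le_norm e b
  have hden : 0 < ‖α‖ ^ 2 * (β + 1) := by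
    have := norm_pos_iff.mpr hα
    positivity
  rw [numRadδ₁, numRadδ₂, div_mul_eq_mul_div, div_mul_eq_mul_div, ← add_div, le_div_iff₀ hden]
  -- `hkey` with weight `1` plus Cauchy–Schwarz `hCS` with weight `β`
  nlinarith [mul_le_mul_of_nonneg_left hCS (mul_nonneg hβ (sq_nonneg ‖α‖)),
    mul_le_mul_of_nonneg_left hα_sq (mul_nonneg hβ (by positivity : (0 : ℝ) ≤ ‖a‖ ^ 2 * ‖b‖ ^ 2))]

end Buzano

section Operator

variable {E : Type*} [NormedAddCommGroup E] [InnerProductSpace ℂ E] [CompleteSpace E]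

theorem numRad_pow_four_le (T : E →L[ℂ] E) {α : ℂ} (hα : α ≠ 0) {β : ℝ} (hβ : 0 ≤ β) :
    numRad T ^ 4 ≤
      numRadδ₁ α β / 4 * ‖adjoint T * T + T * adjoint T‖ ^ 2
        + numRadδ₂ α β * numRad (T * T) ^ 2 := by
  have hδ₁ := numRadδ₁_nonneg α hβ
  have hδ₂ := numRadδ₂_nonneg α hβ
  refine numRad_pow_le_of_forall four_ne_zero (by positivity) fun x hx => ?_
  set S := adjoint T * T + T * adjoint T
  have key := sq_norm_inner_mul_inner_le hα hβ hx (T x) (adjoint T x)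
  simp only [adjoint_inner_right] at key
  have hsum : ‖T x‖ ^ 2 + ‖adjoint T x‖ ^ 2 ≤ ‖S‖ := by
    have h := apply_norm_sq_eq_inner_adjoint_left (adjoint T) x
    rw [adjoint_adjoint] at h
    rw [apply_norm_sq_eq_inner_adjoint_left, h, ← map_add, ← inner_add_left]
    calc RCLike.re ⟪S x, x⟫_ℂ ≤ ‖S x‖ * ‖x‖ := re_inner_le_norm _ _
      _ ≤ ‖S‖ * ‖x‖ * ‖x‖ := by gcongr; exact S.le_opNorm x
      _ = ‖S‖ := by rw [hx, mul_one, mul_one]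
  have hprod : ‖T x‖ ^ 2 * ‖adjoint T x‖ ^ 2 ≤ ‖S‖ ^ 2 / 4 := by
    nlinarith [sq_nonneg (‖T x‖ ^ 2 - ‖adjoint T x‖ ^ 2)]
  have hsq : ‖⟪T (T x), x⟫_ℂ‖ ≤ numRad (T * T) := by
    simpa [hx] using norm_inner_self_le_numRad_mul_sq (T * T) x
  calc ‖⟪T x, x⟫_ℂ‖ ^ 4 = (‖⟪T x, x⟫_ℂ‖ * ‖⟪T x, x⟫_ℂ‖) ^ 2 := by ring
    _ ≤ _ := key
    _ ≤ _ * (‖S‖ ^ 2 / 4) + _ * numRad (T * T) ^ 2 := by gcongr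
    _ = _ := by ring

end Operator

section BlockOperator

variable {H K : Type*} [NormedAddCommGroup H] [InnerProductSpace ℂ H]
  [NormedAddCommGroup K] [InnerProductSpace ℂ K]

lemma opNorm_le_max_of_apply_toLp (S : WithLp 2 (H × K) →L[ℂ] WithLp 2 (H × K))
    (P : H →L[ℂ] H) (Q : K →L[ℂ] K)
    (hS : ∀ x y, S (WithLp.toLp 2 (x, y)) = WithLp.toLp 2 (P x, Q y)) :
    ‖S‖ ≤ max ‖P‖ ‖Q‖ := by
  refine S.opNorm_le_bound (le_max_of_le_left (norm_nonneg P)) fun z => ?_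
  have hSz : S z = WithLp.toLp 2 (P z.fst, Q z.snd) := hS z.fst z.snd
  rw [← pow_le_pow_iff_left₀ (norm_nonneg _) (by positivity) two_ne_zero, mul_pow,
    WithLp.prod_norm_sq_eq_of_L2, WithLp.prod_norm_sq_eq_of_L2, hSz]
  calc ‖P z.fst‖ ^ 2 + ‖Q z.snd‖ ^ 2 ≤ (‖P‖ * ‖z.fst‖) ^ 2 + (‖Q‖ * ‖z.snd‖) ^ 2 := by
        gcongr
        exacts [P.le_opNorm _, Q.le_opNorm _]
    _ ≤ (max ‖P‖ ‖Q‖ * ‖z.fst‖) ^ 2 + (max ‖P‖ ‖Q‖ * ‖z.snd‖) ^ 2 := by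
        gcongr
        exacts [le_max_left _ _, le_max_right _ _]
    _ = _ := by ring

lemma numRad_le_max_of_apply_toLp (S : WithLp 2 (H × K) →L[ℂ] WithLp 2 (H × K))
    (P : H →L[ℂ] H) (Q : K →L[ℂ] K)
    (hS : ∀ x y, S (WithLp.toLp 2 (x, y)) = WithLp.toLp 2 (P x, Q y)) :
    numRad S ≤ max (numRad P) (numRad Q) := by
  rw [← pow_one (numRad S)]
  refine numRad_pow_le_of_forall one_ne_zero (le_max_of_le_left (numRad_nonneg P)) fun z hz => ?_
  have hSz : S z = WithLp.toLp 2 (P z.fst, Q z.snd) := hS z.fst z.snd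
  have hz' : ‖z.fst‖ ^ 2 + ‖z.snd‖ ^ 2 = 1 := by rw [← WithLp.prod_norm_sq_eq_of_L2, hz, one_pow]
  rw [pow_one, hSz, WithLp.prod_inner_apply]
  calc _ ≤ ‖⟪P z.fst, z.fst⟫_ℂ‖ + ‖⟪Q z.snd, z.snd⟫_ℂ‖ := norm_add_le _ _
    _ ≤ numRad P * ‖z.fst‖ ^ 2 + numRad Q * ‖z.snd‖ ^ 2 := by
        gcongr <;> apply norm_inner_self_le_numRad_mul_sq
    _ ≤ max (numRad P) (numRad Q) * ‖z.fst‖ ^ 2 + max (numRad P) (numRad Q) * ‖z.snd‖ ^ 2 := by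
        gcongr
        exacts [le_max_left _ _, le_max_right _ _]
    _ = _ := by rw [← mul_add, hz', mul_one]

end BlockOperator

section OffDiagonal

variable {H K : Type*} [NormedAddCommGroup H] [InnerProductSpace ℂ H]
  [NormedAddCommGroup K] [InnerProductSpace ℂ K]
  {T : WithLp 2 (H × K) →L[ℂ] WithLp 2 (H × K)} {B : K →L[ℂ] H} {C : H →L[ℂ] K}

lemma offDiag_mul_self_apply
    (hT : ∀ x y, T (WithLp.toLp 2 (x, y)) = WithLp.toLp 2 (B y, C x)) (x : H) (y : K) :
    (T * T) (WithLp.toLp 2 (x, y)) = WithLp.toLp 2 ((B ∘L C) x, (C ∘L B) y) := by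
  simp [hT]

variable [CompleteSpace H] [CompleteSpace K]

lemma adjoint_apply_toLp_of_offDiag
    (hT : ∀ x y, T (WithLp.toLp 2 (x, y)) = WithLp.toLp 2 (B y, C x)) (x : H) (y : K) :
    adjoint T (WithLp.toLp 2 (x, y)) = WithLp.toLp 2 (adjoint C y, adjoint B x) := by
  refine ext_inner_right ℂ fun z => ?_
  have hTz : T z = WithLp.toLp 2 (B z.snd, C z.fst) := hT z.fst z.snd
  simp only [adjoint_inner_left, hTz, WithLp.prod_inner_apply]
  simp [add_comm]

lemma offDiag_adjoint_mul_add_mul_adjoint_apply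
    (hT : ∀ x y, T (WithLp.toLp 2 (x, y)) = WithLp.toLp 2 (B y, C x)) (x : H) (y : K) :
    (adjoint T * T + T * adjoint T) (WithLp.toLp 2 (x, y)) =
      WithLp.toLp 2 ((adjoint C ∘L C + B ∘L adjoint B) x, (adjoint B ∘L B + C ∘L adjoint C) y) := by
  simp [hT, adjoint_apply_toLp_of_offDiag hT, ← WithLp.toLp_add]

end OffDiagonal

lemma pow_le_max_pow_of_le_max {a b c : ℝ} (ha : 0 ≤ a) (h : a ≤ max b c) (n : ℕ) :
    a ^ n ≤ max (b ^ n) (c ^ n) := by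
  rcases max_choice b c with hbc | hbc <;> rw [hbc] at h
  · exact le_max_of_le_left (pow_le_pow_left₀ ha h n)
  · exact le_max_of_le_right (pow_le_pow_left₀ ha h n)

/-- Theorem `MOBY-A1`: fourth-power numerical radius bound for the off-diagonal operator
matrix `[[0, B], [C, 0]]` with parameters `α ∈ ℂ \ {0}` and `β ≥ 0`. -/
theorem offdiag_numRad_pow_four {H : Type*}
    [NormedAddCommGroup H] [InnerProductSpace ℂ H] [CompleteSpace H]
    (B C : H →L[ℂ] H) (α : ℂ) (hα : α ≠ 0) (β : ℝ) (hβ : 0 ≤ β)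
    (T : WithLp 2 (H × H) →L[ℂ] WithLp 2 (H × H))
    (hT : ∀ x y : H,
      T ((WithLp.equiv 2 (H × H)).symm (x, y)) = (WithLp.equiv 2 (H × H)).symm (B y, C x)) :
    numRad T ^ 4 ≤
      (2 * (β + 1) * max 1 (‖α - 1‖ ^ 2) + 2 * β) / (‖α‖ ^ 2 * (β + 1)) / 4
          * max (‖adjoint C * C + B * adjoint B‖ ^ 2) (‖adjoint B * B + C * adjoint C‖ ^ 2)
        + 2 / (‖α‖ ^ 2 * (β + 1))
          * max (numRad (B * C) ^ 2) (numRad (C * B) ^ 2) := by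
  have hnorm := pow_le_max_pow_of_le_max (norm_nonneg _)
    (opNorm_le_max_of_apply_toLp _ _ _ (offDiag_adjoint_mul_add_mul_adjoint_apply hT)) 2
  have hrad := pow_le_max_pow_of_le_max (numRad_nonneg _)
    (numRad_le_max_of_apply_toLp _ _ _ (offDiag_mul_self_apply hT)) 2
  calc numRad T ^ 4
      ≤ numRadδ₁ α β / 4 * ‖adjoint T * T + T * adjoint T‖ ^ 2
          + numRadδ₂ α β * numRad (T * T) ^ 2 := numRad_pow_four_le T hα hβ
    _ ≤ numRadδ₁ α β / 4
            * max (‖adjoint C * C + B * adjoint B‖ ^ 2) (‖adjoint B * B + C * adjoint C‖ ^ 2)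
          + numRadδ₂ α β * max (numRad (B * C) ^ 2) (numRad (C * B) ^ 2) := by
        have := numRadδ₁_nonneg α hβ
        have := numRadδ₂_nonneg α hβ
        gcongr
        exacts [hnorm, hrad]
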